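/- Suppose {φ_n}, {ψ_n} are linearly dense in H with ⟨φ_n, ψ_n⟩ = 1, there exists a positive invertible T ∈ B(H) with Tφ_n = ψ_n, and the auxiliary sequences {g_n} and {g̃_n} are canonical dual frames. Then {(φ_n, ψ_n)} and {(ψ_n, φ_n)} are both effective pairs. -/

import Mathlib

/-!
Let `P` be positive and invertible with `P ψ_n = φ_n`, and suppose `Σ ⟨x, g_n⟩ g_n = P x`.
The residuals `e_n = x - x_n` of the dual Kaczmarz algorithm satisfy
`x_n = Σ_{k ≤ n} ⟨x, g_k⟩ ψ_k`, and each step lowers the energy `⟨P e, e⟩` by exactly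
`|⟨x, g_n⟩|²`; so the energy tends to `⟨P x, x⟩ - Σ |⟨x, g_k⟩|² = 0`, and coercivity of `P`
forces `e_n → 0`.

For `(φ, ψ)` take `P = T⁻¹`: induction on the two recursions gives `g̃_n = T g_n`, so
`S T g_n = g_n`; the `g_n` span a dense subspace (it contains every `φ_n`), hence `S = T⁻¹`.
For `(ψ, φ)` take `P = T`: applying `T` to the frame expansion of `T x` in the `g_n` gives
`Σ ⟨x, g̃_n⟩ g̃_n = T x`.
-/

open scoped ComplexInnerProductSpace
open Filter Topology Finset

variable {H : Type*} [NormedAddCommGroup H] [InnerProductSpace ℂ H] [CompleteSpace H]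

/-- The sequence of approximations produced by the dual Kaczmarz algorithm with
analysis sequence `φ` and synthesis sequence `ψ`, applied to `x`.
(Paper's `⟨a, b⟩`, linear in the first slot, is Mathlib's `⟪b, a⟫`.) -/
noncomputable def kacz (φ ψ : ℕ → H) (x : H) : ℕ → H
  | 0 => ⟪φ 0, x⟫ • ψ 0
  | n + 1 => kacz φ ψ x n + ⟪φ (n + 1), x - kacz φ ψ x n⟫ • ψ (n + 1)

/-- `(φ, ψ)` is an effective pair: the dual Kaczmarz approximations converge to `x`
for every `x`. -/
def EffectivePair (φ ψ : ℕ → H) : Prop :=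
  ∀ x : H, Filter.Tendsto (kacz φ ψ x) Filter.atTop (nhds x)

/-- `f` is a frame with bounds `0 < A ≤ B`. -/
def IsFrame (f : ℕ → H) : Prop :=
  ∃ A B : ℝ, 0 < A ∧ A ≤ B ∧
    ∀ x : H, A * ‖x‖ ^ 2 ≤ ∑' n, ‖⟪f n, x⟫‖ ^ 2 ∧ ∑' n, ‖⟪f n, x⟫‖ ^ 2 ≤ B * ‖x‖ ^ 2

/-- The paper's `g̃` is the auxiliary sequence of `(ψ, φ)`. -/
def IsAuxiliarySeq (φ ψ g : ℕ → H) : Prop :=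
  ∀ n, g n = φ n - ∑ k ∈ range n, ⟪ψ k, φ n⟫ • g k

section

omit [CompleteSpace H]

variable {φ ψ g : ℕ → H}

lemma IsAuxiliarySeq.of_zero_of_succ (h0 : g 0 = φ 0)
    (hsucc : ∀ n, g (n + 1) = φ (n + 1) - ∑ k ∈ range (n + 1), ⟪ψ k, φ (n + 1)⟫ • g k) :
    IsAuxiliarySeq φ ψ g
  | 0 => by simpa using h0
  | n + 1 => hsucc n

lemma IsAuxiliarySeq.mem_span_range (hg : IsAuxiliarySeq φ ψ g) (n : ℕ) :
    φ n ∈ Submodule.span ℂ (Set.range g) := by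
  rw [eq_add_of_sub_eq' (hg n).symm]
  exact add_mem
    (Submodule.sum_mem _ fun k _ => Submodule.smul_mem _ _ (Submodule.subset_span ⟨k, rfl⟩))
    (Submodule.subset_span ⟨n, rfl⟩)

lemma IsAuxiliarySeq.inner_sub_sum (hg : IsAuxiliarySeq φ ψ g) (x : H) (n : ℕ) :
    ⟪φ n, x - ∑ k ∈ range n, ⟪g k, x⟫ • ψ k⟫ = ⟪g n, x⟫ := by
  rw [hg n, inner_sub_left, inner_sub_right, sum_inner, inner_sum]
  congr 1
  refine sum_congr rfl fun k _ => ?_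
  rw [inner_smul_left, inner_smul_right, ← inner_conj_symm (φ n) (ψ k)]
  ring

lemma IsAuxiliarySeq.kacz_eq_sum (hg : IsAuxiliarySeq φ ψ g) (x : H) (n : ℕ) :
    kacz φ ψ x n = ∑ k ∈ range (n + 1), ⟪g k, x⟫ • ψ k := by
  induction n with
  | zero => simp [kacz, hg 0]
  | succ n ih => rw [kacz, ih, hg.inner_sub_sum, sum_range_succ _ (n + 1)]

lemma IsAuxiliarySeq.inner_sub_kacz (hg : IsAuxiliarySeq φ ψ g) (x : H) (n : ℕ) :
    ⟪φ (n + 1), x - kacz φ ψ x n⟫ = ⟪g (n + 1), x⟫ := by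
  rw [hg.kacz_eq_sum, hg.inner_sub_sum]

lemma re_inner_sub_smul_map_sub_smul {P : H →L[ℂ] H} (hP : (P : H →ₗ[ℂ] H).IsSymmetric)
    {u v : H} (hPu : P u = v) (huv : ⟪u, v⟫ = 1) (z : H) :
    (⟪z - ⟪v, z⟫ • u, P (z - ⟪v, z⟫ • u)⟫).re = (⟪z, P z⟫).re - ‖⟪v, z⟫‖ ^ 2 := by
  have hvz : ⟪u, P z⟫ = ⟪v, z⟫ := by rw [← hPu]; exact (hP u z).symm
  simp only [map_sub, map_smul, inner_sub_left, inner_sub_right, inner_smul_left,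
    inner_smul_right, hvz, hPu, huv, mul_one]
  rw [← inner_conj_symm z v, sub_self, mul_zero, sub_zero, Complex.conj_mul']
  norm_cast

lemma IsAuxiliarySeq.re_inner_sub_kacz (hg : IsAuxiliarySeq φ ψ g) {P : H →L[ℂ] H}
    (hP : (P : H →ₗ[ℂ] H).IsSymmetric) (hPψ : ∀ n, P (ψ n) = φ n) (hpair : ∀ n, ⟪ψ n, φ n⟫ = 1)
    (x : H) (n : ℕ) :
    (⟪x - kacz φ ψ x n, P (x - kacz φ ψ x n)⟫).re
      = (⟪x, P x⟫).re - ∑ k ∈ range (n + 1), ‖⟪g k, x⟫‖ ^ 2 := by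
  induction n with
  | zero =>
    rw [kacz, re_inner_sub_smul_map_sub_smul hP (hPψ 0) (hpair 0)]
    simp [hg 0]
  | succ n ih =>
    rw [kacz, ← sub_sub, re_inner_sub_smul_map_sub_smul hP (hPψ _) (hpair _), ih,
      hg.inner_sub_kacz, sum_range_succ _ (n + 1)]
    ring

lemma IsAuxiliarySeq.dense_span (hg : IsAuxiliarySeq φ ψ g)
    (hφ : (Submodule.span ℂ (Set.range φ)).topologicalClosure = ⊤) :
    Dense (Submodule.span ℂ (Set.range g) : Set H) := by
  have hle : Submodule.span ℂ (Set.range φ) ≤ Submodule.span ℂ (Set.range g) :=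
    Submodule.span_le.2 (Set.range_subset_iff.2 hg.mem_span_range)
  exact Submodule.dense_iff_topologicalClosure_eq_top.2
    (eq_top_mono (Submodule.topologicalClosure_mono hle) hφ)

lemma IsAuxiliarySeq.map_eq_of_isSymmetric {g' : ℕ → H} (hg : IsAuxiliarySeq φ ψ g)
    (hg' : IsAuxiliarySeq ψ φ g') {T : H →L[ℂ] H} (hT : (T : H →ₗ[ℂ] H).IsSymmetric)
    (hTφ : ∀ n, T (φ n) = ψ n) (n : ℕ) : T (g n) = g' n := by
  induction n using Nat.strong_induction_on with
  | _ n ih =>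
    rw [hg n, hg' n, map_sub, map_sum, hTφ]
    refine congrArg _ (sum_congr rfl fun k hk => ?_)
    have hcoeff : ⟪ψ k, φ n⟫ = ⟪φ k, ψ n⟫ := by rw [← hTφ k, ← hTφ n]; exact hT _ _
    rw [map_smul, ih k (mem_range.1 hk), hcoeff]

lemma hasSum_norm_inner_sq_of_hasSum_smul {g : ℕ → H} {x y : H}
    (h : HasSum (fun n => ⟪g n, x⟫ • g n) y) :
    HasSum (fun n => ‖⟪g n, x⟫‖ ^ 2) (⟪x, y⟫).re := by
  convert (h.mapL (innerSL ℂ x)).mapL Complex.reCLM using 1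
  · ext n
    change _ = (⟪x, ⟪g n, x⟫ • g n⟫).re
    rw [inner_smul_right, ← inner_conj_symm x (g n), Complex.mul_conj']
    norm_cast
  · rfl

lemma ContinuousLinearEquiv.isPositive_symm {T : H ≃L[ℂ] H} (hT : (T : H →L[ℂ] H).IsPositive) :
    (T.symm : H →L[ℂ] H).IsPositive :=
  LinearMap.IsPositive.toLinearMap_symm (T := T.toLinearEquiv) hT.toLinearMap

end

lemma ContinuousLinearMap.IsPositive.exists_pos_mul_norm_sq_le {T : H →L[ℂ] H}
    (hT : T.IsPositive) (hu : IsUnit T) :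
    ∃ c > 0, ∀ y : H, c * ‖y‖ ^ 2 ≤ (⟪y, T y⟫).re := by
  cases subsingleton_or_nontrivial H
  · exact ⟨1, one_pos, fun y => by simp [Subsingleton.elim y 0]⟩
  -- the spectrum of `T` is compact and positive, so `c • 1 ≤ T` for some `c > 0`
  have hT' : IsStrictlyPositive T := hu.isStrictlyPositive ((nonneg_iff_isPositive T).2 hT)
  obtain ⟨c, hc, hcT⟩ := (CFC.exists_pos_algebraMap_le_iff hT'.isSelfAdjoint).2
    fun _ => hT'.spectrum_pos
  refine ⟨c, hc, fun y => ?_⟩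
  have h := ((le_def _ _).1 hcT).re_inner_nonneg_right y
  rw [sub_apply, inner_sub_right, map_sub, sub_nonneg, RCLike.re_to_complex,
    RCLike.re_to_complex] at h
  convert h using 1
  rw [Algebra.algebraMap_eq_smul_one, smul_apply, one_apply_eq_self,
    RCLike.real_smul_eq_coe_smul (K := ℂ), inner_smul_real_right, Complex.real_smul,
    Complex.re_ofReal_mul, ← RCLike.re_to_complex, inner_self_eq_norm_sq]

theorem IsAuxiliarySeq.effectivePair {φ ψ g : ℕ → H} (hg : IsAuxiliarySeq φ ψ g)
    {P : H →L[ℂ] H} (hP : P.IsPositive) (hPu : IsUnit P) (hPψ : ∀ n, P (ψ n) = φ n)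
    (hpair : ∀ n, ⟪ψ n, φ n⟫ = 1) (hsum : ∀ x, HasSum (fun n => ⟪g n, x⟫ • g n) (P x)) :
    EffectivePair φ ψ := by
  intro x
  obtain ⟨c, hc, hcP⟩ := hP.exists_pos_mul_norm_sq_le hPu
  have henergy :
      Tendsto (fun n => (⟪x - kacz φ ψ x n, P (x - kacz φ ψ x n)⟫).re) atTop (𝓝 0) := by
    have := ((hasSum_norm_inner_sq_of_hasSum_smul (hsum x)).tendsto_sum_nat.comp
      (tendsto_add_atTop_nat 1)).const_sub (⟪x, P x⟫).re
    simpa only [sub_self, Function.comp_def, hg.re_inner_sub_kacz hP.isSymmetric hPψ hpair]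
      using this
  have hsq : Tendsto (fun n => ‖x - kacz φ ψ x n‖ ^ 2) atTop (𝓝 0) := by
    refine squeeze_zero (fun n => sq_nonneg _) (fun n => (le_div_iff₀' hc).2 (hcP _)) ?_
    simpa using henergy.div_const c
  rw [tendsto_iff_norm_sub_tendsto_zero]
  simpa [norm_sub_rev] using hsq.sqrt

theorem symmetric_effective_pair_of_canonical_dual_aux_general
    (φ ψ g gt : ℕ → H) (T : H ≃L[ℂ] H) (S : H ≃L[ℂ] H)
    (hφdense : (Submodule.span ℂ (Set.range φ)).topologicalClosure = ⊤)
    (hpair : ∀ n, ⟪ψ n, φ n⟫ = 1)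
    (hTpos : (T : H →L[ℂ] H).IsPositive)
    (hTφ : ∀ n, T (φ n) = ψ n)
    (hg0 : g 0 = φ 0)
    (hg : ∀ n, g (n + 1)
        = φ (n + 1) - ∑ k ∈ Finset.range (n + 1), ⟪ψ k, φ (n + 1)⟫ • g k)
    (hgt0 : gt 0 = ψ 0)
    (hgt : ∀ n, gt (n + 1)
        = ψ (n + 1) - ∑ k ∈ Finset.range (n + 1), ⟪φ k, ψ (n + 1)⟫ • gt k)
    (hSframeOp : ∀ x : H, HasSum (fun n => ⟪g n, x⟫ • g n) (S x))
    (hcanonical : ∀ n, gt n = S.symm (g n)) :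
    EffectivePair φ ψ ∧ EffectivePair ψ φ := by
  have hgaux := IsAuxiliarySeq.of_zero_of_succ hg0 hg
  have hgtaux := IsAuxiliarySeq.of_zero_of_succ hgt0 hgt
  have hTg : ∀ n, T (g n) = gt n := hgaux.map_eq_of_isSymmetric hgtaux hTpos.isSymmetric hTφ
  have hST : (S : H →L[ℂ] H).comp (T : H →L[ℂ] H) = .id ℂ H :=
    ContinuousLinearMap.ext_on (hgaux.dense_span hφdense) <| by
      rintro _ ⟨n, rfl⟩
      simp [hTg, hcanonical]
  have hS : ∀ x, S x = T.symm x := fun x => by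
    simpa using congr($hST (T.symm x))
  have hsum_g : ∀ x, HasSum (fun n => ⟪g n, x⟫ • g n) (T.symm x) := fun x => hS x ▸ hSframeOp x
  have hsum_gt : ∀ x, HasSum (fun n => ⟪gt n, x⟫ • gt n) (T x) := fun x => by
    have h := (hsum_g (T x)).mapL (T : H →L[ℂ] H)
    simp only [ContinuousLinearEquiv.coe_coe, map_smul, hTg, T.apply_symm_apply] at h
    convert h using 3 with n
    rw [← hTg]
    exact hTpos.inner_left_eq_inner_right (g n) x
  refine ⟨hgaux.effectivePair (ContinuousLinearEquiv.isPositive_symm hTpos) T.symm.toUnit.isUnit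
      (fun n => by rw [← hTφ n, ContinuousLinearEquiv.coe_coe, T.symm_apply_apply]) hpair hsum_g,
    hgtaux.effectivePair hTpos T.toUnit.isUnit hTφ
      (fun n => by rw [← inner_conj_symm, hpair, map_one]) hsum_gt⟩

/-- if `⟨φ_n, ψ_n⟩ = 1`, there is a positive invertible `T` with
`Tφ_n = ψ_n`, and the auxiliary sequences `g, g̃` are canonical dual frames
(`g̃_n = S⁻¹ g_n` with `S` the frame operator of `g`), then both `(φ, ψ)` and
`(ψ, φ)` are effective pairs. -/
theorem symmetric_effective_pair_of_canonical_dual_aux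
    (φ ψ g gt : ℕ → H) (T : H ≃L[ℂ] H) (S : H ≃L[ℂ] H)
    (hφdense : (Submodule.span ℂ (Set.range φ)).topologicalClosure = ⊤)
    (hψdense : (Submodule.span ℂ (Set.range ψ)).topologicalClosure = ⊤)
    (hpair : ∀ n, ⟪ψ n, φ n⟫ = 1)
    (hTpos : (T : H →L[ℂ] H).IsPositive)
    (hTφ : ∀ n, T (φ n) = ψ n)
    (hg0 : g 0 = φ 0)
    (hg : ∀ n, g (n + 1)
        = φ (n + 1) - ∑ k ∈ Finset.range (n + 1), ⟪ψ k, φ (n + 1)⟫ • g k)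
    (hgt0 : gt 0 = ψ 0)
    (hgt : ∀ n, gt (n + 1)
        = ψ (n + 1) - ∑ k ∈ Finset.range (n + 1), ⟪φ k, ψ (n + 1)⟫ • gt k)
    (hgframe : IsFrame g)
    (hSframeOp : ∀ x : H, HasSum (fun n => ⟪g n, x⟫ • g n) (S x))
    (hcanonical : ∀ n, gt n = S.symm (g n)) :
    EffectivePair φ ψ ∧ EffectivePair ψ φ :=
  symmetric_effective_pair_of_canonical_dual_aux_general φ ψ g gt T S hφdense hpair hTpos hTφ hg0 hg
    hgt0 hgt hSframeOp hcanonical
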